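/- arXiv:2402.12929 — 2 statements merged into one kernel-verified Lean document; each statement's English description precedes it below -/
import Mathlib

section
/- Let p ≥ q ≥ 1 with d = p + q, and let λ ∈ a* be nonzero. If there exists a nonzero X ∈ so(p,q) such that [F, X] = λ(F)·X for all F ∈ a, then λ is one of the functionals ±f_i (with 1 ≤ i ≤ q, possible only when p ≠ q), or ±f_i ± f_j, or ±f_i ∓ f_j (with 1 ≤ i < j ≤ q). That is, the restricted roots of (so(p,q), a) are exactly ±f_i (if p ≠ q), ±f_i ± f_j, and ±f_i ∓ f_j. -/
open Matrix

/-- `J = diag(I_p, -I_q)` as a `(p+q) × (p+q)` real matrix. -/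
noncomputable def Jmat (p q : ℕ) : Matrix (Fin (p + q)) (Fin (p + q)) ℝ :=
  Matrix.diagonal fun k => if (k : ℕ) < p then 1 else -1

/-- `so(p,q)`: the matrices `X` with `Xᵀ * J + J * X = 0`. -/
noncomputable def soPQ (p q : ℕ) : Submodule ℝ (Matrix (Fin (p + q)) (Fin (p + q)) ℝ) where
  carrier := {X | Xᵀ * Jmat p q + Jmat p q * X = 0}
  add_mem' := by
    intro X Y hX hY
    simp only [Set.mem_setOf_eq] at hX hY ⊢
    have h : (X + Y)ᵀ * Jmat p q + Jmat p q * (X + Y) =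
        (Xᵀ * Jmat p q + Jmat p q * X) + (Yᵀ * Jmat p q + Jmat p q * Y) := by
      rw [transpose_add]; noncomm_ring
    rw [h, hX, hY, add_zero]
  zero_mem' := by simp
  smul_mem' := by
    intro c X hX
    simp only [Set.mem_setOf_eq] at hX ⊢
    rw [transpose_smul, smul_mul_assoc, mul_smul_comm, ← smul_add, hX, smul_zero]

/-- `s`: traceless matrices `X = (A B; C D)` (in `p,q`-block form) with
`Aᵀ = A`, `Dᵀ = D` and `B = -Cᵀ`, written entrywise: entries on the same side of the
block decomposition are symmetric, entries on opposite sides are antisymmetric. -/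
noncomputable def sPQ (p q : ℕ) : Submodule ℝ (Matrix (Fin (p + q)) (Fin (p + q)) ℝ) where
  carrier := {X | X.trace = 0 ∧
    (∀ i j : Fin (p + q), ((i : ℕ) < p ↔ (j : ℕ) < p) → X i j = X j i) ∧
    (∀ i j : Fin (p + q), (i : ℕ) < p → ¬ (j : ℕ) < p → X i j = - X j i)}
  add_mem' := by
    intro X Y hX hY
    obtain ⟨hX1, hX2, hX3⟩ := hX
    obtain ⟨hY1, hY2, hY3⟩ := hY
    refine ⟨by rw [trace_add, hX1, hY1, add_zero], ?_, ?_⟩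
    · intro i j hij
      simp only [Matrix.add_apply, hX2 i j hij, hY2 i j hij]
    · intro i j h1 h2
      simp only [Matrix.add_apply, hX3 i j h1 h2, hY3 i j h1 h2]
      ring
  zero_mem' := by
    refine ⟨by simp, ?_, ?_⟩ <;> intro i j <;> simp
  smul_mem' := by
    intro c X hX
    obtain ⟨hX1, hX2, hX3⟩ := hX
    refine ⟨by rw [trace_smul, hX1, smul_zero], ?_, ?_⟩
    · intro i j hij
      simp only [Matrix.smul_apply, hX2 i j hij]
    · intro i j h1 h2
      simp only [Matrix.smul_apply, hX3 i j h1 h2, smul_neg]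
  
/-- `sl_d(ℝ)`: traceless `d × d` real matrices, `d = p + q`. -/
noncomputable def slD (p q : ℕ) : Submodule ℝ (Matrix (Fin (p + q)) (Fin (p + q)) ℝ) :=
  LinearMap.ker (Matrix.traceLinearMap (Fin (p + q)) ℝ ℝ)

/-- `E_{k,l}` (with 1-based indices `k, l`): the `d × d` real matrix with a `1` in
entry `(k, l)` and `0` elsewhere. -/
noncomputable def Ee (d k l : ℕ) : Matrix (Fin d) (Fin d) ℝ :=
  fun a b => if (a : ℕ) + 1 = k ∧ (b : ℕ) + 1 = l then 1 else 0

/-- `A_{i,j} = E_{p+1-i, p+1-j}`. -/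
noncomputable def Amat (p q i j : ℕ) : Matrix (Fin (p + q)) (Fin (p + q)) ℝ :=
  Ee (p + q) (p + 1 - i) (p + 1 - j)

/-- `B_{i,j} = E_{p+1-i, p+j}`. -/
noncomputable def Bmat (p q i j : ℕ) : Matrix (Fin (p + q)) (Fin (p + q)) ℝ :=
  Ee (p + q) (p + 1 - i) (p + j)

/-- `C_{i,j} = E_{p+i, p+1-j}`. -/
noncomputable def Cmat (p q i j : ℕ) : Matrix (Fin (p + q)) (Fin (p + q)) ℝ :=
  Ee (p + q) (p + i) (p + 1 - j)

/-- `D_{i,j} = E_{p+i, p+j}`. -/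
noncomputable def Dmat (p q i j : ℕ) : Matrix (Fin (p + q)) (Fin (p + q)) ℝ :=
  Ee (p + q) (p + i) (p + j)

/-- The generator `B_{k,k} + C_{k,k}` of the maximal abelian subalgebra `a`. -/
noncomputable def aGen (p q k : ℕ) : Matrix (Fin (p + q)) (Fin (p + q)) ℝ :=
  Bmat p q k k + Cmat p q k k

/-- The maximal abelian subalgebra `a`, spanned by `B_{k,k} + C_{k,k}`, `1 ≤ k ≤ q`. -/
noncomputable def aSub (p q : ℕ) : Submodule ℝ (Matrix (Fin (p + q)) (Fin (p + q)) ℝ) :=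
  Submodule.span ℝ {M | ∃ k, 1 ≤ k ∧ k ≤ q ∧ M = aGen p q k}

/-- The generic element `F = ∑_{k=1}^{q} a_k (B_{k,k} + C_{k,k})` of `a`. -/
noncomputable def Fmat (p q : ℕ) (a : ℕ → ℝ) : Matrix (Fin (p + q)) (Fin (p + q)) ℝ :=
  ∑ k ∈ Finset.Icc 1 q, a k • aGen p q k

lemma EemulL {d : ℕ} (u v : ℕ) (hv : v < d) (X : Matrix (Fin d) (Fin d) ℝ) (m n : Fin d) :
    (Ee d (u+1) (v+1) * X) m n = if (m:ℕ) = u then X ⟨v, hv⟩ n else 0 := by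
  rw [Matrix.mul_apply]
  simp only [Ee]
  by_cases h : (m:ℕ) = u
  · rw [if_pos h, Finset.sum_eq_single (⟨v, hv⟩ : Fin d)]
    · simp [h]
    · intro b _ hb
      have : ¬((m:ℕ)+1 = u+1 ∧ (b:ℕ)+1 = v+1) := by
        rintro ⟨-, h2⟩
        exact hb (Fin.eq_of_val_eq (show _ = v by omega))
      rw [if_neg this, zero_mul]
    · simp
  · rw [if_neg h]
    apply Finset.sum_eq_zero
    intro b _
    have : ¬((m:ℕ)+1 = u+1 ∧ (b:ℕ)+1 = v+1) := by rintro ⟨h1, -⟩; omega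
    rw [if_neg this, zero_mul]

lemma EemulR {d : ℕ} (u v : ℕ) (hu : u < d) (X : Matrix (Fin d) (Fin d) ℝ) (m n : Fin d) :
    (X * Ee d (u+1) (v+1)) m n = if (n:ℕ) = v then X m ⟨u, hu⟩ else 0 := by
  rw [Matrix.mul_apply]
  simp only [Ee]
  by_cases h : (n:ℕ) = v
  · rw [if_pos h, Finset.sum_eq_single (⟨u, hu⟩ : Fin d)]
    · simp [h]
    · intro b _ hb
      have : ¬((b:ℕ)+1 = u+1 ∧ (n:ℕ)+1 = v+1) := by
        rintro ⟨h2, -⟩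
        exact hb (Fin.eq_of_val_eq (show _ = u by omega))
      rw [if_neg this, mul_zero]
    · simp
  · rw [if_neg h]
    apply Finset.sum_eq_zero
    intro b _
    have : ¬((b:ℕ)+1 = u+1 ∧ (n:ℕ)+1 = v+1) := by rintro ⟨-, h1⟩; omega
    rw [if_neg this, mul_zero]

lemma sign_of (t u v : ℝ) (ht : t ≠ 0) (h1 : u = v * t) (h2 : t = v * u) : v = 1 ∨ v = -1 := by
  have h3 : t = v * (v * t) := by rw [← h1]; exact h2
  have h4 : (v * v - 1) * t = 0 := by linear_combination -h3
  rcases mul_eq_zero.mp h4 with h | h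
  · exact mul_self_eq_one_iff.mp (by linarith)
  · exact absurd h ht

lemma keyE (p q : ℕ) (hq1 : 1 ≤ q) (hqp : q ≤ p) (c : ℕ → ℝ)
    (X : Matrix (Fin (p+q)) (Fin (p+q)) ℝ)
    (hroot : ∀ a : ℕ → ℝ,
      Fmat p q a * X - X * Fmat p q a = (∑ k ∈ Finset.Icc 1 q, a k * c k) • X)
    (e : ℕ) (he1 : 1 ≤ e) (he2 : e ≤ q) (m n : Fin (p+q)) :
    (if (m:ℕ) = p - e then X ⟨p+e-1, by omega⟩ n else 0)
  + (if (m:ℕ) = p+e-1 then X ⟨p-e, by omega⟩ n else 0)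
  - (if (n:ℕ) = p+e-1 then X m ⟨p-e, by omega⟩ else 0)
  - (if (n:ℕ) = p-e then X m ⟨p+e-1, by omega⟩ else 0)
  = c e * X m n := by
  have ha := hroot (fun t => if t = e then 1 else 0)
  have hmem : e ∈ Finset.Icc 1 q := Finset.mem_Icc.mpr ⟨he1, he2⟩
  have hF : Fmat p q (fun t => if t = e then (1:ℝ) else 0) = aGen p q e := by
    unfold Fmat
    rw [Finset.sum_eq_single e (fun b _ hb => by simp [hb]) (fun h => absurd hmem h)]
    simp
  have hs : (∑ k ∈ Finset.Icc 1 q, (if k = e then (1:ℝ) else 0) * c k) = c e := by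
    rw [Finset.sum_eq_single e (fun b _ hb => by simp [hb]) (fun h => absurd hmem h)]
    simp
  simp only [hF] at ha
  rw [hs] at ha
  have hgen : aGen p q e
      = Ee (p+q) ((p-e)+1) ((p+e-1)+1) + Ee (p+q) ((p+e-1)+1) ((p-e)+1) := by
    have e1 : p+1-e = p-e+1 := by omega
    have e2 : p+e-1+1 = p+e := by omega
    have h1 : Bmat p q e e = Ee (p+q) ((p-e)+1) ((p+e-1)+1) := by
      show Ee (p+q) (p+1-e) (p+e) = _
      rw [e1, e2]
    have h2 : Cmat p q e e = Ee (p+q) ((p+e-1)+1) ((p-e)+1) := by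
      show Ee (p+q) (p+e) (p+1-e) = _
      rw [e1, e2]
    unfold aGen
    rw [h1, h2]
  rw [hgen] at ha
  have ha' := congrFun (congrFun ha m) n
  rw [Matrix.sub_apply, Matrix.add_mul, Matrix.mul_add, Matrix.add_apply, Matrix.add_apply,
      EemulL (p-e) (p+e-1) (by omega) X m n, EemulL (p+e-1) (p-e) (by omega) X m n,
      EemulR (p-e) (p+e-1) (by omega) X m n, EemulR (p+e-1) (p-e) (by omega) X m n,
      Matrix.smul_apply, smul_eq_mul] at ha'
  linarith [ha']

lemma keyE2 (p q : ℕ) (hq1 : 1 ≤ q) (hqp : q ≤ p) (c : ℕ → ℝ)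
    (X : Matrix (Fin (p+q)) (Fin (p+q)) ℝ)
    (hroot : ∀ a : ℕ → ℝ,
      Fmat p q a * X - X * Fmat p q a = (∑ k ∈ Finset.Icc 1 q, a k * c k) • X)
    (e : ℕ) (he1 : 1 ≤ e) (he2 : e ≤ q) (k l : ℕ)
    (hk1 : 1 ≤ k) (hk2 : k ≤ q) (hl1 : 1 ≤ l) (hl2 : l ≤ q)
    (m m' n n' : Fin (p+q))
    (hm : ((m:ℕ) = p - k ∧ (m':ℕ) = p + k - 1) ∨ ((m:ℕ) = p + k - 1 ∧ (m':ℕ) = p - k))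
    (hn : ((n:ℕ) = p - l ∧ (n':ℕ) = p + l - 1) ∨ ((n:ℕ) = p + l - 1 ∧ (n':ℕ) = p - l)) :
    (if e = k then X m' n else 0) - (if e = l then X m n' else 0) = c e * X m n := by
  have h := keyE p q hq1 hqp c X hroot e he1 he2 m n
  have hrow : (if (m:ℕ) = p - e then X ⟨p+e-1, by omega⟩ n else 0)
      + (if (m:ℕ) = p+e-1 then X ⟨p-e, by omega⟩ n else 0)
      = (if e = k then X m' n else 0) := by
    by_cases hek : e = k
    · subst hek
      rcases hm with ⟨h1, h2⟩ | ⟨h1, h2⟩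
      · rw [if_pos (by omega), if_neg (by omega), if_pos rfl, add_zero]
        congr 1
        exact Fin.eq_of_val_eq (by simp; omega)
      · rw [if_neg (by omega), if_pos (by omega), if_pos rfl, zero_add]
        congr 1
        exact Fin.eq_of_val_eq (by simp; omega)
    · rw [if_neg (by omega), if_neg (by omega), if_neg hek, add_zero]
  have hcol : (if (n:ℕ) = p+e-1 then X m ⟨p-e, by omega⟩ else 0)
      + (if (n:ℕ) = p-e then X m ⟨p+e-1, by omega⟩ else 0)
      = (if e = l then X m n' else 0) := by
    by_cases hel : e = l
    · subst hel
      rcases hn with ⟨h1, h2⟩ | ⟨h1, h2⟩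
      · rw [if_neg (by omega), if_pos (by omega), if_pos rfl, zero_add]
        congr 1
        exact Fin.eq_of_val_eq (by simp; omega)
      · rw [if_pos (by omega), if_neg (by omega), if_pos rfl, add_zero]
        congr 1
        exact Fin.eq_of_val_eq (by simp; omega)
    · rw [if_neg (by omega), if_neg (by omega), if_neg hel, add_zero]
  linarith [h, hrow, hcol]

lemma keyBothLow (p q : ℕ) (hq1 : 1 ≤ q) (hqp : q ≤ p) (c : ℕ → ℝ)
    (X : Matrix (Fin (p+q)) (Fin (p+q)) ℝ)
    (hroot : ∀ a : ℕ → ℝ,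
      Fmat p q a * X - X * Fmat p q a = (∑ k ∈ Finset.Icc 1 q, a k * c k) • X)
    (e : ℕ) (he1 : 1 ≤ e) (he2 : e ≤ q) (m n : Fin (p+q))
    (hm : (m:ℕ) < p - q) (hn : (n:ℕ) < p - q) :
    (0:ℝ) = c e * X m n := by
  have h := keyE p q hq1 hqp c X hroot e he1 he2 m n
  rw [if_neg (by omega), if_neg (by omega), if_neg (by omega), if_neg (by omega)] at h
  linarith [h]

lemma keyRowLow (p q : ℕ) (hq1 : 1 ≤ q) (hqp : q ≤ p) (c : ℕ → ℝ)
    (X : Matrix (Fin (p+q)) (Fin (p+q)) ℝ)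
    (hroot : ∀ a : ℕ → ℝ,
      Fmat p q a * X - X * Fmat p q a = (∑ k ∈ Finset.Icc 1 q, a k * c k) • X)
    (e : ℕ) (he1 : 1 ≤ e) (he2 : e ≤ q) (l : ℕ) (hl1 : 1 ≤ l) (hl2 : l ≤ q)
    (m n n' : Fin (p+q)) (hm : (m:ℕ) < p - q)
    (hn : ((n:ℕ) = p - l ∧ (n':ℕ) = p + l - 1) ∨ ((n:ℕ) = p + l - 1 ∧ (n':ℕ) = p - l)) :
    -(if e = l then X m n' else 0) = c e * X m n := by
  have h := keyE p q hq1 hqp c X hroot e he1 he2 m n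
  rw [if_neg (by omega), if_neg (by omega)] at h
  by_cases hel : e = l
  · subst hel
    rcases hn with ⟨h1, h2⟩ | ⟨h1, h2⟩
    · rw [if_neg (by omega), if_pos (by omega)] at h
      rw [if_pos rfl, show n' = (⟨p + e - 1, by omega⟩ : Fin (p+q)) from Fin.eq_of_val_eq (by simp; omega)]
      linarith [h]
    · rw [if_pos (by omega), if_neg (by omega)] at h
      rw [if_pos rfl, show n' = (⟨p - e, by omega⟩ : Fin (p+q)) from Fin.eq_of_val_eq (by simp; omega)]
      linarith [h]
  · rw [if_neg (by omega), if_neg (by omega)] at h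
    rw [if_neg hel]
    linarith [h]

lemma keyColLow (p q : ℕ) (hq1 : 1 ≤ q) (hqp : q ≤ p) (c : ℕ → ℝ)
    (X : Matrix (Fin (p+q)) (Fin (p+q)) ℝ)
    (hroot : ∀ a : ℕ → ℝ,
      Fmat p q a * X - X * Fmat p q a = (∑ k ∈ Finset.Icc 1 q, a k * c k) • X)
    (e : ℕ) (he1 : 1 ≤ e) (he2 : e ≤ q) (k : ℕ) (hk1 : 1 ≤ k) (hk2 : k ≤ q)
    (m m' n : Fin (p+q)) (hn : (n:ℕ) < p - q)
    (hm : ((m:ℕ) = p - k ∧ (m':ℕ) = p + k - 1) ∨ ((m:ℕ) = p + k - 1 ∧ (m':ℕ) = p - k)) :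
    (if e = k then X m' n else 0) = c e * X m n := by
  have h := keyE p q hq1 hqp c X hroot e he1 he2 m n
  rw [show ((if (n:ℕ) = p+e-1 then X m ⟨p-e, by omega⟩ else 0) = 0) from if_neg (by omega),
      show ((if (n:ℕ) = p-e then X m ⟨p+e-1, by omega⟩ else 0) = 0) from if_neg (by omega)] at h
  by_cases hek : e = k
  · subst hek
    rcases hm with ⟨h1, h2⟩ | ⟨h1, h2⟩
    · rw [if_pos (by omega), if_neg (by omega)] at h
      rw [if_pos rfl, show m' = (⟨p + e - 1, by omega⟩ : Fin (p+q)) from Fin.eq_of_val_eq (by simp; omega)]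
      linarith [h]
    · rw [if_neg (by omega), if_pos (by omega)] at h
      rw [if_pos rfl, show m' = (⟨p - e, by omega⟩ : Fin (p+q)) from Fin.eq_of_val_eq (by simp; omega)]
      linarith [h]
  · rw [if_neg (by omega), if_neg (by omega)] at h
    rw [if_neg hek]
    linarith [h]

/-- The restricted roots of `(so(p,q), a)` are exactly `±f_i` (possible only if `p ≠ q`),
`±f_i ± f_j` and `±f_i ∓ f_j` (`1 ≤ i < j ≤ q`).  A functional `λ ∈ a*` is encoded by its
coefficients `c k = λ(B_{k,k} + C_{k,k})` on the basis of `a`; `λ(F) = ∑ a_k * c_k` for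
`F = ∑ a_k (B_{k,k} + C_{k,k})`, and `λ ≠ 0` means some `c k ≠ 0` for `1 ≤ k ≤ q`. -/
theorem restricted_roots_classification (p q : ℕ) (hq1 : 1 ≤ q) (hqp : q ≤ p)
    (c : ℕ → ℝ) (hc : ∃ k, 1 ≤ k ∧ k ≤ q ∧ c k ≠ 0)
    (X : Matrix (Fin (p + q)) (Fin (p + q)) ℝ) (hX0 : X ≠ 0) (hXso : X ∈ soPQ p q)
    (hroot : ∀ a : ℕ → ℝ,
      Fmat p q a * X - X * Fmat p q a = (∑ k ∈ Finset.Icc 1 q, a k * c k) • X) :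
    (p ≠ q ∧ ∃ i, 1 ≤ i ∧ i ≤ q ∧ ∃ ε : ℝ, (ε = 1 ∨ ε = -1) ∧
      ∀ k, 1 ≤ k → k ≤ q → c k = if k = i then ε else 0) ∨
    (∃ i j, 1 ≤ i ∧ i < j ∧ j ≤ q ∧
      ∃ ε₁ ε₂ : ℝ, (ε₁ = 1 ∨ ε₁ = -1) ∧ (ε₂ = 1 ∨ ε₂ = -1) ∧
      ∀ k, 1 ≤ k → k ≤ q → c k = if k = i then ε₁ else if k = j then ε₂ else 0) := by
  classical
  obtain ⟨m, n, hx⟩ : ∃ m n, X m n ≠ 0 := by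
    by_contra h
    push_neg at h
    exact hX0 (by ext a b; simpa using h a b)
  have pairing : ∀ t : Fin (p+q), ¬ (t:ℕ) < p - q → ∃ k, 1 ≤ k ∧ k ≤ q ∧ ∃ t' : Fin (p+q),
      (((t:ℕ) = p - k ∧ (t':ℕ) = p + k - 1) ∨ ((t:ℕ) = p + k - 1 ∧ (t':ℕ) = p - k)) := by
    intro t ht
    by_cases h : (t:ℕ) < p
    · exact ⟨p - (t:ℕ), by omega, by omega, ⟨p + (p - (t:ℕ)) - 1, by omega⟩,
        Or.inl ⟨by omega, rfl⟩⟩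
    · exact ⟨(t:ℕ) - p + 1, by omega, by omega, ⟨p - ((t:ℕ) - p + 1), by omega⟩,
        Or.inr ⟨by omega, rfl⟩⟩
  by_cases hm : (m:ℕ) < p - q
  · by_cases hn : (n:ℕ) < p - q
    · exfalso
      obtain ⟨e, he1, he2, hce⟩ := hc
      have h := keyBothLow p q hq1 hqp c X hroot e he1 he2 m n hm hn
      rcases mul_eq_zero.mp h.symm with h' | h'
      · exact hce h'
      · exact hx h'
    · -- m low, n in a pair : root ± f_l
      obtain ⟨l, hl1, hl2, n', hnp⟩ := pairing n hn
      left
      have hzero : ∀ e, 1 ≤ e → e ≤ q → e ≠ l → c e = 0 := by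
        intro e he1 he2 hel
        have h := keyRowLow p q hq1 hqp c X hroot e he1 he2 l hl1 hl2 m n n' hm hnp
        rw [if_neg hel, neg_zero] at h
        rcases mul_eq_zero.mp h.symm with h' | h'
        · exact h'
        · exact absurd h' hx
      have h1 := keyRowLow p q hq1 hqp c X hroot l hl1 hl2 l hl1 hl2 m n n' hm hnp
      rw [if_pos rfl] at h1
      have hnp' : ((n':ℕ) = p - l ∧ (n:ℕ) = p + l - 1) ∨
          ((n':ℕ) = p + l - 1 ∧ (n:ℕ) = p - l) := by
        rcases hnp with ⟨a, b⟩ | ⟨a, b⟩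
        · exact Or.inr ⟨b, a⟩
        · exact Or.inl ⟨b, a⟩
      have h2 := keyRowLow p q hq1 hqp c X hroot l hl1 hl2 l hl1 hl2 m n' n hm hnp'
      rw [if_pos rfl] at h2
      have hsgn : c l = 1 ∨ c l = -1 :=
        sign_of (X m n) (-(X m n')) (c l) hx h1 (by linear_combination -h2)
      refine ⟨by omega, l, hl1, hl2, c l, hsgn, fun k hk1 hk2 => ?_⟩
      by_cases hkl : k = l
      · subst hkl; rw [if_pos rfl]
      · rw [if_neg hkl]; exact hzero k hk1 hk2 hkl
  · by_cases hn : (n:ℕ) < p - q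
    · -- n low, m in a pair : root ± f_k
      obtain ⟨k, hk1, hk2, m', hmp⟩ := pairing m hm
      left
      have hzero : ∀ e, 1 ≤ e → e ≤ q → e ≠ k → c e = 0 := by
        intro e he1 he2 hek
        have h := keyColLow p q hq1 hqp c X hroot e he1 he2 k hk1 hk2 m m' n hn hmp
        rw [if_neg hek] at h
        rcases mul_eq_zero.mp h.symm with h' | h'
        · exact h'
        · exact absurd h' hx
      have h1 := keyColLow p q hq1 hqp c X hroot k hk1 hk2 k hk1 hk2 m m' n hn hmp
      rw [if_pos rfl] at h1
      have hmp' : ((m':ℕ) = p - k ∧ (m:ℕ) = p + k - 1) ∨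
          ((m':ℕ) = p + k - 1 ∧ (m:ℕ) = p - k) := by
        rcases hmp with ⟨a, b⟩ | ⟨a, b⟩
        · exact Or.inr ⟨b, a⟩
        · exact Or.inl ⟨b, a⟩
      have h2 := keyColLow p q hq1 hqp c X hroot k hk1 hk2 k hk1 hk2 m' m n hn hmp'
      rw [if_pos rfl] at h2
      have hsgn : c k = 1 ∨ c k = -1 :=
        sign_of (X m n) (X m' n) (c k) hx h1 h2
      refine ⟨by omega, k, hk1, hk2, c k, hsgn, fun e he1 he2 => ?_⟩
      by_cases hek : e = k
      · subst hek; rw [if_pos rfl]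
      · rw [if_neg hek]; exact hzero e he1 he2 hek
    · -- both in pairs
      obtain ⟨k, hk1, hk2, m', hmp⟩ := pairing m hm
      obtain ⟨l, hl1, hl2, n', hnp⟩ := pairing n hn
      have hmp' : ((m':ℕ) = p - k ∧ (m:ℕ) = p + k - 1) ∨
          ((m':ℕ) = p + k - 1 ∧ (m:ℕ) = p - k) := by
        rcases hmp with ⟨a, b⟩ | ⟨a, b⟩
        · exact Or.inr ⟨b, a⟩
        · exact Or.inl ⟨b, a⟩
      have hnp' : ((n':ℕ) = p - l ∧ (n:ℕ) = p + l - 1) ∨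
          ((n':ℕ) = p + l - 1 ∧ (n:ℕ) = p - l) := by
        rcases hnp with ⟨a, b⟩ | ⟨a, b⟩
        · exact Or.inr ⟨b, a⟩
        · exact Or.inl ⟨b, a⟩
      by_cases hkl : k = l
      · -- same pair: impossible
        exfalso
        subst hkl
        have hXent : ∀ a b : Fin (p+q),
            X b a * (if (b:ℕ) < p then (1:ℝ) else -1)
              + (if (a:ℕ) < p then (1:ℝ) else -1) * X a b = 0 := by
          have h0 : Xᵀ * Jmat p q + Jmat p q * X = 0 := hXso
          intro a b
          have h := congrFun (congrFun h0 a) b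
          simpa [Jmat, Matrix.mul_diagonal, Matrix.diagonal_mul, Matrix.transpose_apply]
            using h
        have hdiag : ∀ t : Fin (p+q), X t t = 0 := by
          intro t
          have h := hXent t t
          by_cases ht : (t:ℕ) < p
          · rw [if_pos ht] at h; linarith [h]
          · rw [if_neg ht] at h; linarith [h]
        obtain ⟨e, he1, he2, hce⟩ := hc
        rcases hmp with ⟨a1, a2⟩ | ⟨a1, a2⟩ <;> rcases hnp with ⟨b1, b2⟩ | ⟨b1, b2⟩
        · exact hx (by rw [show n = m from Fin.eq_of_val_eq (by omega)]; exact hdiag m)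
        · have em' : m' = n := Fin.eq_of_val_eq (by omega)
          have en' : n' = m := Fin.eq_of_val_eq (by omega)
          have h := keyE2 p q hq1 hqp c X hroot e he1 he2 k k hk1 hk2 hk1 hk2
            m m' n n' (Or.inl ⟨a1, a2⟩) (Or.inr ⟨b1, b2⟩)
          rw [em', en', hdiag n, hdiag m] at h
          simp only [ite_self, sub_self] at h
          rcases mul_eq_zero.mp h.symm with h' | h'
          · exact hce (by
              by_cases hek : e = k
              · subst hek; exact h'
              · have h2 := keyE2 p q hq1 hqp c X hroot e he1 he2 k k hk1 hk2 hk1 hk2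
                  m m' n n' (Or.inl ⟨a1, a2⟩) (Or.inr ⟨b1, b2⟩)
                rw [if_neg hek, if_neg hek, sub_self] at h2
                rcases mul_eq_zero.mp h2.symm with h3 | h3
                · exact h3
                · exact absurd h3 hx)
          · exact hx h'
        · have em' : m' = n := Fin.eq_of_val_eq (by omega)
          have en' : n' = m := Fin.eq_of_val_eq (by omega)
          have h := keyE2 p q hq1 hqp c X hroot e he1 he2 k k hk1 hk2 hk1 hk2
            m m' n n' (Or.inr ⟨a1, a2⟩) (Or.inl ⟨b1, b2⟩)
          rw [em', en', hdiag n, hdiag m] at h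
          simp only [ite_self, sub_self] at h
          rcases mul_eq_zero.mp h.symm with h' | h'
          · exact hce (by
              by_cases hek : e = k
              · subst hek; exact h'
              · have h2 := keyE2 p q hq1 hqp c X hroot e he1 he2 k k hk1 hk2 hk1 hk2
                  m m' n n' (Or.inr ⟨a1, a2⟩) (Or.inl ⟨b1, b2⟩)
                rw [if_neg hek, if_neg hek, sub_self] at h2
                rcases mul_eq_zero.mp h2.symm with h3 | h3
                · exact h3
                · exact absurd h3 hx)
          · exact hx h'
        · exact hx (by rw [show n = m from Fin.eq_of_val_eq (by omega)]; exact hdiag m)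
      · -- k ≠ l : root ± f_k ± f_l
        right
        have hzero : ∀ e, 1 ≤ e → e ≤ q → e ≠ k → e ≠ l → c e = 0 := by
          intro e he1 he2 hek hel
          have h := keyE2 p q hq1 hqp c X hroot e he1 he2 k l hk1 hk2 hl1 hl2
            m m' n n' hmp hnp
          rw [if_neg hek, if_neg hel, sub_zero] at h
          rcases mul_eq_zero.mp h.symm with h' | h'
          · exact h'
          · exact absurd h' hx
        have h1 := keyE2 p q hq1 hqp c X hroot k hk1 hk2 k l hk1 hk2 hl1 hl2
          m m' n n' hmp hnp
        rw [if_pos rfl, if_neg hkl, sub_zero] at h1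
        have h2 := keyE2 p q hq1 hqp c X hroot k hk1 hk2 k l hk1 hk2 hl1 hl2
          m' m n n' hmp' hnp
        rw [if_pos rfl, if_neg hkl, sub_zero] at h2
        have hck : c k = 1 ∨ c k = -1 := sign_of (X m n) (X m' n) (c k) hx h1 h2
        have hlk : l ≠ k := Ne.symm hkl
        have h3 := keyE2 p q hq1 hqp c X hroot l hl1 hl2 k l hk1 hk2 hl1 hl2
          m m' n n' hmp hnp
        rw [if_neg hlk, if_pos rfl, zero_sub] at h3
        have h4 := keyE2 p q hq1 hqp c X hroot l hl1 hl2 k l hk1 hk2 hl1 hl2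
          m m' n' n hmp hnp'
        rw [if_neg hlk, if_pos rfl, zero_sub] at h4
        have hcl : c l = 1 ∨ c l = -1 :=
          sign_of (X m n) (-(X m n')) (c l) hx h3 (by linear_combination -h4)
        rcases Nat.lt_or_ge k l with hlt | hge
        · exact ⟨k, l, hk1, hlt, hl2, c k, c l, hck, hcl, fun e he1 he2 => by
            by_cases hek : e = k
            · subst hek; rw [if_pos rfl]
            · rw [if_neg hek]
              by_cases hel : e = l
              · subst hel; rw [if_pos rfl]
              · rw [if_neg hel]; exact hzero e he1 he2 hek hel⟩
        · have hlt : l < k := by omega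
          exact ⟨l, k, hl1, hlt, hk2, c l, c k, hcl, hck, fun e he1 he2 => by
            by_cases hel : e = l
            · subst hel; rw [if_pos rfl]
            · rw [if_neg hel]
              by_cases hek : e = k
              · subst hek; rw [if_pos rfl]
              · rw [if_neg hek]; exact hzero e he1 he2 hek hel⟩
end

section
/- Let p ≥ q ≥ 1 with d = p + q. The centralizer of a in so(p,q), i.e. the space of X ∈ so(p,q) with [F, X] = 0 for all F ∈ a, equals m ⊕ a, where m is the span of the matrices A_{q+i, q+j} − A_{q+j, q+i} for 1 ≤ i < j ≤ p − q; in particular this centralizer has dimension (p−q)(p−q−1)/2 + q. -/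
open Matrix

/-- `m`: the span of the matrices `A_{q+i,q+j} - A_{q+j,q+i}`, `1 ≤ i < j ≤ p - q`. -/
noncomputable def mSub (p q : ℕ) : Submodule ℝ (Matrix (Fin (p + q)) (Fin (p + q)) ℝ) :=
  Submodule.span ℝ
    {M | ∃ i j, 1 ≤ i ∧ i < j ∧ j ≤ p - q ∧
      M = Amat p q (q + i) (q + j) - Amat p q (q + j) (q + i)}

namespace CentralizerAux

open Finset

variable {d : ℕ}

lemma Ee_mul_apply (K L L' : ℕ) (X : Matrix (Fin d) (Fin d) ℝ) (i j : Fin d)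
    (hL : L' + 1 = L) (h' : L' < d) :
    (Ee d K L * X) i j = if (i : ℕ) + 1 = K then X ⟨L', h'⟩ j else 0 := by
  rw [Matrix.mul_apply]
  simp only [Ee]
  by_cases h : (i : ℕ) + 1 = K
  · rw [if_pos h, Finset.sum_eq_single (⟨L', h'⟩ : Fin d)]
    · rw [if_pos ⟨h, hL⟩, one_mul]
    · intro b _ hb
      rw [if_neg, zero_mul]
      rintro ⟨-, hc⟩
      exact hb (Fin.ext (show (b:ℕ) = L' by omega))
    · intro hmem; exact absurd (Finset.mem_univ _) hmem
  · rw [if_neg h]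
    exact Finset.sum_eq_zero fun b _ => by rw [if_neg (fun hc => h hc.1), zero_mul]

lemma mul_Ee_apply (K K' L : ℕ) (X : Matrix (Fin d) (Fin d) ℝ) (i j : Fin d)
    (hK : K' + 1 = K) (h' : K' < d) :
    (X * Ee d K L) i j = if (j : ℕ) + 1 = L then X i ⟨K', h'⟩ else 0 := by
  rw [Matrix.mul_apply]
  simp only [Ee]
  by_cases h : (j : ℕ) + 1 = L
  · rw [if_pos h, Finset.sum_eq_single (⟨K', h'⟩ : Fin d)]
    · rw [if_pos ⟨hK, h⟩, mul_one]
    · intro b _ hb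
      rw [if_neg, mul_zero]
      rintro ⟨hc, -⟩
      exact hb (Fin.ext (show (b:ℕ) = K' by omega))
    · intro hmem; exact absurd (Finset.mem_univ _) hmem
  · rw [if_neg h]
    exact Finset.sum_eq_zero fun b _ => by rw [if_neg (fun hc => h hc.2), mul_zero]


lemma mem_soPQ_iff (p q : ℕ) (X : Matrix (Fin (p+q)) (Fin (p+q)) ℝ) :
    X ∈ soPQ p q ↔ ∀ i j : Fin (p+q),
      X j i * (if (j : ℕ) < p then (1:ℝ) else -1)
        + (if (i : ℕ) < p then (1:ℝ) else -1) * X i j = 0 := by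
  change Xᵀ * Jmat p q + Jmat p q * X = 0 ↔ _
  rw [← Matrix.ext_iff]
  simp only [Jmat, Matrix.add_apply, Matrix.mul_diagonal, Matrix.diagonal_mul,
    Matrix.transpose_apply, Matrix.zero_apply]

/-- matrices commuting with `A`, as a submodule. -/
def commW {n : Type*} [Fintype n] [DecidableEq n] (A : Matrix n n ℝ) :
    Submodule ℝ (Matrix n n ℝ) where
  carrier := {Y | A * Y - Y * A = 0}
  add_mem' := by
    intro a b ha hb
    simp only [Set.mem_setOf_eq] at *
    have h : A * (a + b) - (a + b) * A = (A * a - a * A) + (A * b - b * A) := by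
      noncomm_ring
    rw [h, ha, hb, add_zero]
  zero_mem' := by simp
  smul_mem' := by
    intro c a ha
    simp only [Set.mem_setOf_eq] at *
    rw [mul_smul_comm, smul_mul_assoc, ← smul_sub, ha, smul_zero]

lemma mem_commW {n : Type*} [Fintype n] [DecidableEq n] (A Y : Matrix n n ℝ) :
    Y ∈ commW A ↔ A * Y = Y * A := sub_eq_zero

/-- submodule of matrices vanishing on a set of entries -/
def entryZero (d : ℕ) (P : Fin d → Fin d → Prop) :
    Submodule ℝ (Matrix (Fin d) (Fin d) ℝ) where
  carrier := {X | ∀ i j, P i j → X i j = 0}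
  add_mem' := fun ha hb i j h => by
    simp only [Matrix.add_apply, ha i j h, hb i j h, add_zero]
  zero_mem' := fun i j _ => rfl
  smul_mem' := fun c X hX => fun i j h => by
    simp only [Matrix.smul_apply, hX i j h, smul_zero]


noncomputable def mGen (p q i j : ℕ) : Matrix (Fin (p+q)) (Fin (p+q)) ℝ :=
  Amat p q (q+i) (q+j) - Amat p q (q+j) (q+i)

lemma aGen_apply (p q k : ℕ) (i j : Fin (p+q)) :
    aGen p q k i j = (if (i:ℕ)+1 = p+1-k ∧ (j:ℕ)+1 = p+k then (1:ℝ) else 0)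
      + (if (i:ℕ)+1 = p+k ∧ (j:ℕ)+1 = p+1-k then (1:ℝ) else 0) := rfl

lemma mGen_apply (p q u v : ℕ) (a b : Fin (p+q)) :
    mGen p q u v a b
      = (if (a:ℕ)+1 = p+1-(q+u) ∧ (b:ℕ)+1 = p+1-(q+v) then (1:ℝ) else 0)
      - (if (a:ℕ)+1 = p+1-(q+v) ∧ (b:ℕ)+1 = p+1-(q+u) then (1:ℝ) else 0) := rfl

lemma aGen_mem_soPQ (p q : ℕ) (hq1 : 1 ≤ q) (hqp : q ≤ p) (k : ℕ)
    (hk1 : 1 ≤ k) (hk2 : k ≤ q) : aGen p q k ∈ soPQ p q := by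
  rw [mem_soPQ_iff]
  intro i j
  simp only [aGen_apply]
  split_ifs <;> first | (exfalso; omega) | norm_num

lemma mGen_mem_soPQ (p q : ℕ) (hq1 : 1 ≤ q) (hqp : q ≤ p) (u v : ℕ)
    (hu : 1 ≤ u) (huv : u < v) (hv : v ≤ p - q) : mGen p q u v ∈ soPQ p q := by
  rw [mem_soPQ_iff]
  intro i j
  simp only [mGen_apply]
  split_ifs <;> first | (exfalso; omega) | norm_num

lemma comm_entries (p q : ℕ) (hq1 : 1 ≤ q) (hqp : q ≤ p) (k : ℕ) (hk1 : 1 ≤ k) (hk2 : k ≤ q)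
    (X : Matrix (Fin (p+q)) (Fin (p+q)) ℝ) (h : aGen p q k * X = X * aGen p q k)
    (i j : Fin (p+q)) :
    (if (i:ℕ)+1 = p+1-k then X ⟨p+k-1, by omega⟩ j else 0)
      + (if (i:ℕ)+1 = p+k then X ⟨p-k, by omega⟩ j else 0)
    = (if (j:ℕ)+1 = p+k then X i ⟨p-k, by omega⟩ else 0)
      + (if (j:ℕ)+1 = p+1-k then X i ⟨p+k-1, by omega⟩ else 0) := by
  have h' : (aGen p q k * X) i j = (X * aGen p q k) i j := by rw [h]
  rw [aGen, Bmat, Cmat, Matrix.add_mul, Matrix.mul_add, Matrix.add_apply, Matrix.add_apply,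
    Ee_mul_apply (p+1-k) (p+k) (p+k-1) X i j (by omega) (by omega),
    Ee_mul_apply (p+k) (p+1-k) (p-k) X i j (by omega) (by omega),
    mul_Ee_apply (p+1-k) (p-k) (p+k) X i j (by omega) (by omega),
    mul_Ee_apply (p+k) (p+k-1) (p+1-k) X i j (by omega) (by omega)] at h'
  exact h'

lemma Ee_mul_Ee (d K L K' L' : ℕ) (hL1 : 1 ≤ L) (hLd : L ≤ d) :
    Ee d K L * Ee d K' L' = if L = K' then Ee d K L' else 0 := by
  ext i j
  rw [Ee_mul_apply K L (L-1) _ i j (by omega) (by omega)]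
  by_cases h : L = K'
  · rw [if_pos h]
    by_cases h1 : (i:ℕ)+1 = K
    · rw [if_pos h1]
      simp [Ee, show L-1+1 = K' from by omega, h1]
    · rw [if_neg h1]
      simp [Ee, h1]
  · rw [if_neg h]
    by_cases h1 : (i:ℕ)+1 = K
    · rw [if_pos h1]
      simp [Ee, show ¬(L-1+1 = K') from by omega]
    · rw [if_neg h1]
      simp

lemma aGen_eq (p q k : ℕ) :
    aGen p q k = Ee (p+q) (p+1-k) (p+k) + Ee (p+q) (p+k) (p+1-k) := rfl

lemma mGen_eq (p q u v : ℕ) :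
    mGen p q u v = Ee (p+q) (p+1-(q+u)) (p+1-(q+v)) - Ee (p+q) (p+1-(q+v)) (p+1-(q+u)) := rfl

lemma aGen_mul_aGen (p q : ℕ) (hq1 : 1 ≤ q) (hqp : q ≤ p) (k l : ℕ)
    (hk1 : 1 ≤ k) (hk2 : k ≤ q) (hl1 : 1 ≤ l) (hl2 : l ≤ q) :
    aGen p q k * aGen p q l
      = if k = l then Ee (p+q) (p+1-k) (p+1-k) + Ee (p+q) (p+k) (p+k) else 0 := by
  rw [aGen_eq p q k, aGen_eq p q l, Matrix.add_mul, Matrix.mul_add, Matrix.mul_add,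
    Ee_mul_Ee _ _ _ _ _ (by omega) (by omega), Ee_mul_Ee _ _ _ _ _ (by omega) (by omega),
    Ee_mul_Ee _ _ _ _ _ (by omega) (by omega), Ee_mul_Ee _ _ _ _ _ (by omega) (by omega)]
  by_cases hkl : k = l
  · subst hkl
    rw [if_neg (by omega), if_pos rfl, if_pos (by omega), if_neg (by omega), if_pos rfl]
    rw [zero_add, add_zero]
  · rw [if_neg (by omega), if_neg (by omega), if_neg (by omega), if_neg (by omega),
      if_neg hkl]
    simp

lemma aGen_comm (p q : ℕ) (hq1 : 1 ≤ q) (hqp : q ≤ p) (k l : ℕ)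
    (hk1 : 1 ≤ k) (hk2 : k ≤ q) (hl1 : 1 ≤ l) (hl2 : l ≤ q) :
    aGen p q k * aGen p q l - aGen p q l * aGen p q k = 0 := by
  rw [aGen_mul_aGen p q hq1 hqp k l hk1 hk2 hl1 hl2,
    aGen_mul_aGen p q hq1 hqp l k hl1 hl2 hk1 hk2]
  by_cases hkl : k = l
  · subst hkl; rw [sub_self]
  · rw [if_neg hkl, if_neg (Ne.symm hkl), sub_self]

lemma aGen_mGen (p q : ℕ) (hq1 : 1 ≤ q) (hqp : q ≤ p) (k u v : ℕ)
    (hk1 : 1 ≤ k) (hk2 : k ≤ q) (hu : 1 ≤ u) (huv : u < v) (hv : v ≤ p - q) :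
    aGen p q k * mGen p q u v - mGen p q u v * aGen p q k = 0 := by
  rw [aGen_eq p q k, mGen_eq p q u v, Matrix.add_mul, Matrix.mul_sub, Matrix.mul_sub,
    Matrix.sub_mul, Matrix.mul_add, Matrix.mul_add,
    Ee_mul_Ee _ _ _ _ _ (by omega) (by omega), Ee_mul_Ee _ _ _ _ _ (by omega) (by omega),
    Ee_mul_Ee _ _ _ _ _ (by omega) (by omega), Ee_mul_Ee _ _ _ _ _ (by omega) (by omega),
    Ee_mul_Ee _ _ _ _ _ (by omega) (by omega), Ee_mul_Ee _ _ _ _ _ (by omega) (by omega),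
    Ee_mul_Ee _ _ _ _ _ (by omega) (by omega), Ee_mul_Ee _ _ _ _ _ (by omega) (by omega),
    if_neg (by omega), if_neg (by omega), if_neg (by omega), if_neg (by omega),
    if_neg (by omega), if_neg (by omega), if_neg (by omega), if_neg (by omega)]
  simp


lemma sum_pred_mul_two (n : ℕ) : (∑ j ∈ Finset.Icc 1 n, (j-1)) * 2 = n * (n-1) := by
  induction n with
  | zero => simp
  | succ m ih =>
    rw [Finset.sum_Icc_succ_top (by omega), add_mul, ih]
    rcases m with _ | t
    · simp
    · simp only [Nat.add_sub_cancel]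
      ring

lemma card_pairs (n : ℕ) :
    ((Finset.Icc 1 n).sigma fun j => Finset.Ico 1 j).card = n*(n-1)/2 := by
  rw [Finset.card_sigma, Finset.sum_congr rfl (fun j _ => Nat.card_Ico 1 j),
    ← sum_pred_mul_two n, Nat.mul_div_cancel _ two_pos]

lemma aSub_eq (p q : ℕ) :
    aSub p q = Submodule.span ℝ
      (Set.range (fun k : ↥(Finset.Icc 1 q) => aGen p q (k:ℕ))) := by
  rw [aSub]
  congr 1
  ext M
  constructor
  · rintro ⟨k, h1, h2, rfl⟩
    exact ⟨⟨k, Finset.mem_Icc.mpr ⟨h1, h2⟩⟩, rfl⟩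
  · rintro ⟨⟨k, hk⟩, rfl⟩
    obtain ⟨h1, h2⟩ := Finset.mem_Icc.mp hk
    exact ⟨k, h1, h2, rfl⟩

lemma aGen_li (p q : ℕ) (hq1 : 1 ≤ q) (hqp : q ≤ p) :
    LinearIndependent ℝ (fun k : ↥(Finset.Icc 1 q) => aGen p q (k:ℕ)) := by
  rw [Fintype.linearIndependent_iff]
  intro g hg k0
  obtain ⟨hk1, hk2⟩ := Finset.mem_Icc.mp k0.2
  set i0 : Fin (p+q) := ⟨p - ↑k0, by omega⟩ with hi0
  set j0 : Fin (p+q) := ⟨p + ↑k0 - 1, by omega⟩ with hj0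
  have hvi : (i0:ℕ) = p - ↑k0 := rfl
  have hvj : (j0:ℕ) = p + ↑k0 - 1 := rfl
  have h : ∑ b : ↥(Finset.Icc 1 q), g b * aGen p q (b:ℕ) i0 j0 = 0 := by
    have h0 := congrFun (congrFun hg i0) j0
    simpa [Matrix.sum_apply] using h0
  rw [Finset.sum_eq_single k0] at h
  · rw [aGen_apply] at h
    rw [if_pos ⟨by omega, by omega⟩, if_neg (by omega)] at h
    simpa using h
  · intro b _ hb
    have hbv : (b:ℕ) ≠ (k0:ℕ) := fun hc => hb (Subtype.ext hc)
    obtain ⟨hb1, hb2⟩ := Finset.mem_Icc.mp b.2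
    rw [aGen_apply, if_neg (by omega), if_neg (by omega)]
    simp
  · intro hmem; exact absurd (Finset.mem_univ _) hmem

lemma finrank_aSub (p q : ℕ) (hq1 : 1 ≤ q) (hqp : q ≤ p) :
    Module.finrank ℝ ↥(aSub p q) = q := by
  rw [aSub_eq, finrank_span_eq_card (aGen_li p q hq1 hqp), Fintype.card_coe, Nat.card_Icc]
  omega


lemma mSub_eq (p q : ℕ) :
    mSub p q = Submodule.span ℝ (Set.range
      (fun x : ↥((Finset.Icc 1 (p-q)).sigma fun j => Finset.Ico 1 j) =>
        mGen p q (x : (_ : ℕ) × ℕ).2 (x : (_ : ℕ) × ℕ).1)) := by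
  rw [mSub]
  congr 1
  ext M
  constructor
  · rintro ⟨i, j, h1, h2, h3, rfl⟩
    exact ⟨⟨⟨j, i⟩, by
      simp only [Finset.mem_sigma, Finset.mem_Icc, Finset.mem_Ico]; omega⟩, rfl⟩
  · rintro ⟨⟨⟨j, i⟩, hx⟩, rfl⟩
    obtain ⟨hj, hi⟩ := Finset.mem_sigma.mp hx
    obtain ⟨hj1, hj2⟩ := Finset.mem_Icc.mp hj
    obtain ⟨hi1, hi2⟩ := Finset.mem_Ico.mp hi
    exact ⟨i, j, hi1, hi2, hj2, rfl⟩

lemma mGen_li (p q : ℕ) (hq1 : 1 ≤ q) (hqp : q ≤ p) :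
    LinearIndependent ℝ
      (fun x : ↥((Finset.Icc 1 (p-q)).sigma fun j => Finset.Ico 1 j) =>
        mGen p q (x : (_ : ℕ) × ℕ).2 (x : (_ : ℕ) × ℕ).1) := by
  rw [Fintype.linearIndependent_iff]
  intro g hg x0
  obtain ⟨⟨jv, iv⟩, hx0⟩ := x0
  obtain ⟨hj0, hi0⟩ := Finset.mem_sigma.mp hx0
  obtain ⟨hj1, hj2⟩ := Finset.mem_Icc.mp (show jv ∈ Finset.Icc 1 (p-q) from hj0)
  obtain ⟨hi1, hi2⟩ := Finset.mem_Ico.mp (show iv ∈ Finset.Ico 1 jv from hi0)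
  set a0 : Fin (p+q) := ⟨p - q - iv, by omega⟩ with ha0
  set b0 : Fin (p+q) := ⟨p - q - jv, by omega⟩ with hb0
  have hva : (a0:ℕ) = p - q - iv := rfl
  have hvb : (b0:ℕ) = p - q - jv := rfl
  have h : ∑ x : ↥((Finset.Icc 1 (p-q)).sigma fun j => Finset.Ico 1 j),
      g x * mGen p q (x : (_ : ℕ) × ℕ).2 (x : (_ : ℕ) × ℕ).1 a0 b0 = 0 := by
    have h0 := congrFun (congrFun hg a0) b0
    simpa [Matrix.sum_apply] using h0
  rw [Finset.sum_eq_single ⟨⟨jv, iv⟩, hx0⟩] at h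
  · replace h : g ⟨⟨jv, iv⟩, hx0⟩ * mGen p q iv jv a0 b0 = 0 := h
    rw [mGen_apply, if_pos ⟨by omega, by omega⟩, if_neg (by omega)] at h
    simpa using h
  · intro b _ hb
    obtain ⟨⟨bj, bi⟩, hbmem⟩ := b
    obtain ⟨hbj, hbi⟩ := Finset.mem_sigma.mp hbmem
    obtain ⟨hbj1, hbj2⟩ := Finset.mem_Icc.mp (show bj ∈ Finset.Icc 1 (p-q) from hbj)
    obtain ⟨hbi1, hbi2⟩ := Finset.mem_Ico.mp (show bi ∈ Finset.Ico 1 bj from hbi)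
    have hne : ¬(bj = jv ∧ bi = iv) := fun ⟨e1, e2⟩ => hb (by subst e1; subst e2; rfl)
    show g ⟨⟨bj, bi⟩, hbmem⟩ * mGen p q bi bj a0 b0 = 0
    rw [mGen_apply, if_neg (by omega), if_neg (by omega)]
    simp
  · intro hmem; exact absurd (Finset.mem_univ _) hmem

lemma finrank_mSub (p q : ℕ) (hq1 : 1 ≤ q) (hqp : q ≤ p) :
    Module.finrank ℝ ↥(mSub p q) = (p-q)*(p-q-1)/2 := by
  rw [mSub_eq, finrank_span_eq_card (mGen_li p q hq1 hqp), Fintype.card_coe, card_pairs]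

lemma inf_eq_bot (p q : ℕ) (hq1 : 1 ≤ q) (hqp : q ≤ p) :
    mSub p q ⊓ aSub p q = ⊥ := by
  rw [eq_bot_iff]
  rintro X ⟨hm, ha⟩
  have hA : aSub p q ≤ entryZero (p+q) (fun i j => (i:ℕ) < p ∧ (j:ℕ) < p) := by
    rw [aSub]
    apply Submodule.span_le.mpr
    rintro M ⟨k, h1, h2, rfl⟩
    intro i j hp
    rw [aGen_apply, if_neg (by omega), if_neg (by omega)]
    simp
  have hM : mSub p q ≤ entryZero (p+q)
      (fun i j => p - q ≤ (i:ℕ) ∨ p - q ≤ (j:ℕ)) := by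
    rw [mSub]
    apply Submodule.span_le.mpr
    rintro M ⟨u, v, h1, h2, h3, rfl⟩
    intro i j hp
    have : Amat p q (q+u) (q+v) - Amat p q (q+v) (q+u) = mGen p q u v := rfl
    rw [this, mGen_apply, if_neg (by omega), if_neg (by omega)]
    simp
  rw [Submodule.mem_bot]
  ext i j
  rw [Matrix.zero_apply]
  by_cases hc : p - q ≤ (i:ℕ) ∨ p - q ≤ (j:ℕ)
  · exact hM hm i j hc
  · push_neg at hc
    exact hA ha i j ⟨by omega, by omega⟩


lemma mem_commW' {n : Type*} [Fintype n] [DecidableEq n] (A Y : Matrix n n ℝ) :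
    Y ∈ commW A ↔ A * Y - Y * A = 0 := Iff.rfl

end CentralizerAux

section
set_option maxHeartbeats 2000000
open CentralizerAux
/-- The centralizer of `a` in `so(p,q)` equals `m ⊕ a`; in particular it has dimension
`(p-q)(p-q-1)/2 + q`. -/
theorem centralizer_eq_m_oplus_a (p q : ℕ) (hq1 : 1 ≤ q) (hqp : q ≤ p) :
    {X | X ∈ soPQ p q ∧ ∀ F ∈ aSub p q, F * X - X * F = 0}
      = ↑(mSub p q ⊔ aSub p q) ∧
    mSub p q ⊓ aSub p q = ⊥ ∧
    Module.finrank ℝ ↥(mSub p q ⊔ aSub p q)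
      = (p - q) * (p - q - 1) / 2 + q := by
  have hd : 0 < p + q := by omega
  have hinf : mSub p q ⊓ aSub p q = ⊥ := inf_eq_bot p q hq1 hqp
  have hrank : Module.finrank ℝ ↥(mSub p q ⊔ aSub p q) = (p-q)*(p-q-1)/2 + q := by
    have h := Submodule.finrank_sup_add_finrank_inf_eq (mSub p q) (aSub p q)
    rw [hinf, finrank_bot, add_zero, finrank_mSub p q hq1 hqp, finrank_aSub p q hq1 hqp] at h
    exact h
  refine ⟨?_, hinf, hrank⟩
  ext X
  simp only [Set.mem_setOf_eq, SetLike.mem_coe]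
  constructor
  · -- centralizer ⊆ m ⊔ a
    rintro ⟨hso, hcom⟩
    have hE := (mem_soPQ_iff p q X).mp hso
    have hcomm : ∀ k, 1 ≤ k → k ≤ q → ∀ r s : Fin (p+q),
        (r:ℕ) = p - k → (s:ℕ) = p + k - 1 → ∀ i j : Fin (p+q),
        (if (i:ℕ)+1 = p+1-k then X s j else 0)
          + (if (i:ℕ)+1 = p+k then X r j else 0)
        = (if (j:ℕ)+1 = p+k then X i r else 0)
          + (if (j:ℕ)+1 = p+1-k then X i s else 0) := by
      intro k hk1 hk2 r s hr hs i j
      have hre : r = (⟨p-k, by omega⟩ : Fin (p+q)) := Fin.ext hr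
      have hse : s = (⟨p+k-1, by omega⟩ : Fin (p+q)) := Fin.ext hs
      rw [hre, hse]
      exact comm_entries p q hq1 hqp k hk1 hk2 X
        (sub_eq_zero.mp (hcom _ (Submodule.subset_span ⟨k, hk1, hk2, rfl⟩))) i j
    have hdiag : ∀ i : Fin (p+q), (i:ℕ) < p → X i i = 0 := by
      intro i h1
      have h := hE i i
      rw [if_pos h1] at h
      linarith
    have hanti : ∀ i j : Fin (p+q), (i:ℕ) < p → (j:ℕ) < p → X j i = - X i j := by
      intro i j h1 h2
      have h := hE i j
      rw [if_pos h2, if_pos h1] at h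
      linarith
    have hupper : ∀ i j : Fin (p+q), (i:ℕ) < p - q → p - q ≤ (j:ℕ) → X i j = 0 := by
      intro i j h1 h2
      have hj' := j.isLt
      by_cases hjp : (j:ℕ) < p
      · set k := p - (j:ℕ) with hk
        set s : Fin (p+q) := ⟨p + k - 1, by omega⟩ with hsd
        have hs : (s:ℕ) = p + k - 1 := rfl
        have h := hcomm k (by omega) (by omega) j s (by omega) hs i s
        have c1 : ¬((i:ℕ)+1 = p+1-k) := by omega
        have c2 : ¬((i:ℕ)+1 = p+k) := by omega
        have c3 : (s:ℕ)+1 = p+k := by omega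
        have c4 : ¬((s:ℕ)+1 = p+1-k) := by omega
        rw [if_neg c1, if_neg c2, if_pos c3, if_neg c4] at h
        linarith
      · set k := (j:ℕ) + 1 - p with hk
        set r : Fin (p+q) := ⟨p - k, by omega⟩ with hrd
        have hr : (r:ℕ) = p - k := rfl
        have h := hcomm k (by omega) (by omega) r j hr (by omega) i r
        have c1 : ¬((i:ℕ)+1 = p+1-k) := by omega
        have c2 : ¬((i:ℕ)+1 = p+k) := by omega
        have c3 : ¬((r:ℕ)+1 = p+k) := by omega
        have c4 : (r:ℕ)+1 = p+1-k := by omega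
        rw [if_neg c1, if_neg c2, if_neg c3, if_pos c4] at h
        linarith
    have hlower : ∀ i j : Fin (p+q), p - q ≤ (i:ℕ) → (j:ℕ) < p - q → X i j = 0 := by
      intro i j hi hj
      have h0 := hE i j
      rw [hupper j i hj hi] at h0
      by_cases hip : (i:ℕ) < p
      · rw [if_pos (show (j:ℕ) < p by omega), if_pos hip] at h0
        linarith
      · rw [if_pos (show (j:ℕ) < p by omega), if_neg hip] at h0
        linarith
    have hsymm : ∀ i j : Fin (p+q), p ≤ (i:ℕ) → (j:ℕ) < p →
        (i:ℕ) + (j:ℕ) = 2*p - 1 → X i j = X j i := by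
      intro i j hi hj hsum
      have hi' := i.isLt
      set k := (i:ℕ) + 1 - p with hk
      have h := hcomm k (by omega) (by omega) j i (by omega) (by omega) i i
      have c1 : ¬((i:ℕ)+1 = p+1-k) := by omega
      have c2 : (i:ℕ)+1 = p+k := by omega
      rw [if_neg c1, if_pos c2, if_pos c2] at h
      linarith
    have hd5 : ∀ i j : Fin (p+q), p - q ≤ (i:ℕ) → p - q ≤ (j:ℕ) →
        (i:ℕ) + (j:ℕ) ≠ 2*p - 1 → X i j = 0 := by
      intro i j hi hj hsum
      have hi' := i.isLt
      have hj' := j.isLt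
      by_cases hip : (i:ℕ) < p
      · by_cases heq : (i:ℕ) = (j:ℕ)
        · have hij : i = j := Fin.ext heq
          rw [hij]
          exact hdiag j (by omega)
        · set k := p - (i:ℕ) with hk
          set s : Fin (p+q) := ⟨p + k - 1, by omega⟩ with hsd
          have hs : (s:ℕ) = p + k - 1 := rfl
          have h := hcomm k (by omega) (by omega) i s (by omega) hs s j
          have c1 : ¬((s:ℕ)+1 = p+1-k) := by omega
          have c2 : (s:ℕ)+1 = p+k := by omega
          have c3 : ¬((j:ℕ)+1 = p+k) := by omega
          have c4 : ¬((j:ℕ)+1 = p+1-k) := by omega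
          rw [if_neg c1, if_pos c2, if_neg c3, if_neg c4] at h
          linarith
      · set k := (i:ℕ) + 1 - p with hk
        set r : Fin (p+q) := ⟨p - k, by omega⟩ with hrd
        have hr : (r:ℕ) = p - k := rfl
        have h := hcomm k (by omega) (by omega) r i hr (by omega) r j
        have c1 : (r:ℕ)+1 = p+1-k := by omega
        have c2 : ¬((r:ℕ)+1 = p+k) := by omega
        have c4 : ¬((j:ℕ)+1 = p+1-k) := by omega
        by_cases c3 : (j:ℕ)+1 = p+k
        · rw [if_pos c1, if_neg c2, if_pos c3, if_neg c4] at h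
          rw [hdiag r (by omega)] at h
          linarith
        · rw [if_pos c1, if_neg c2, if_neg c3, if_neg c4] at h
          linarith
    -- the decomposition X = Mm + Fm
    set e : ℕ → Fin (p+q) := fun t => ⟨t % (p+q), Nat.mod_lt t hd⟩ with hedef
    have he : ∀ t, t < p+q → ((e t):ℕ) = t := fun t ht => Nat.mod_eq_of_lt ht
    set S := (Finset.Icc 1 (p-q)).sigma (fun j => Finset.Ico 1 j) with hSdef
    set Mm : Matrix (Fin (p+q)) (Fin (p+q)) ℝ :=
      ∑ x ∈ S, X (e (p - q - x.2)) (e (p - q - x.1)) • mGen p q x.2 x.1 with hMdef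
    set Fm : Matrix (Fin (p+q)) (Fin (p+q)) ℝ :=
      ∑ k ∈ Finset.Icc 1 q, X (e (p - k)) (e (p + k - 1)) • aGen p q k with hFdef
    have hMmem : Mm ∈ mSub p q := by
      rw [hMdef]
      apply Submodule.sum_mem
      intro x hx
      obtain ⟨xj, xi⟩ := x
      obtain ⟨h1', h2'⟩ := Finset.mem_sigma.mp hx
      obtain ⟨ha1, ha2⟩ := Finset.mem_Icc.mp (show xj ∈ Finset.Icc 1 (p-q) from h1')
      obtain ⟨hb1, hb2⟩ := Finset.mem_Ico.mp (show xi ∈ Finset.Ico 1 xj from h2')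
      exact Submodule.smul_mem _ _ (Submodule.subset_span ⟨xi, xj, hb1, hb2, ha2, rfl⟩)
    have hFmem : Fm ∈ aSub p q := by
      rw [hFdef]
      apply Submodule.sum_mem
      intro k hk
      obtain ⟨h1', h2'⟩ := Finset.mem_Icc.mp hk
      exact Submodule.smul_mem _ _ (Submodule.subset_span ⟨k, h1', h2', rfl⟩)
    have hMz : ∀ i j : Fin (p+q),
        (¬((i:ℕ) < p-q ∧ (j:ℕ) < p-q) ∨ (i:ℕ) = (j:ℕ)) → Mm i j = 0 := by
      intro i j hc
      rw [hMdef, Matrix.sum_apply]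
      apply Finset.sum_eq_zero
      intro x hx
      obtain ⟨xj, xi⟩ := x
      obtain ⟨h1', h2'⟩ := Finset.mem_sigma.mp hx
      obtain ⟨ha1, ha2⟩ := Finset.mem_Icc.mp (show xj ∈ Finset.Icc 1 (p-q) from h1')
      obtain ⟨hb1, hb2⟩ := Finset.mem_Ico.mp (show xi ∈ Finset.Ico 1 xj from h2')
      show X (e (p - q - xi)) (e (p - q - xj)) • mGen p q xi xj i j = 0
      rw [mGen_apply, if_neg (by omega), if_neg (by omega)]
      simp
    have hMv1 : ∀ i j : Fin (p+q), (i:ℕ) < p-q → (j:ℕ) < p-q →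
        (j:ℕ) < (i:ℕ) → Mm i j = X i j := by
      intro i j h1 h2 h3
      have hmem : (⟨p-q-(j:ℕ), p-q-(i:ℕ)⟩ : (_:ℕ) × ℕ) ∈ S := by
        rw [hSdef]
        simp only [Finset.mem_sigma, Finset.mem_Icc, Finset.mem_Ico]
        omega
      rw [hMdef, Matrix.sum_apply]
      refine (Finset.sum_eq_single_of_mem _ hmem ?_).trans ?_
      · intro x hxS hne
        obtain ⟨xj, xi⟩ := x
        obtain ⟨h1', h2'⟩ := Finset.mem_sigma.mp hxS
        obtain ⟨ha1, ha2⟩ := Finset.mem_Icc.mp (show xj ∈ Finset.Icc 1 (p-q) from h1')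
        obtain ⟨hb1, hb2⟩ := Finset.mem_Ico.mp (show xi ∈ Finset.Ico 1 xj from h2')
        have hne' : ¬(xj = p-q-(j:ℕ) ∧ xi = p-q-(i:ℕ)) :=
          fun ⟨u1, u2⟩ => hne (by subst u1; subst u2; rfl)
        show X (e (p - q - xi)) (e (p - q - xj)) • mGen p q xi xj i j = 0
        rw [mGen_apply, if_neg (by omega), if_neg (by omega)]
        simp
      · show X (e (p-q-(p-q-(i:ℕ)))) (e (p-q-(p-q-(j:ℕ))))
            • mGen p q (p-q-(i:ℕ)) (p-q-(j:ℕ)) i j = X i j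
        have e1 : e (p-q-(p-q-(i:ℕ))) = i := Fin.ext (by rw [he _ (by omega)]; omega)
        have e2 : e (p-q-(p-q-(j:ℕ))) = j := Fin.ext (by rw [he _ (by omega)]; omega)
        rw [e1, e2, mGen_apply, if_pos ⟨by omega, by omega⟩,
          if_neg (by omega)]
        simp
    have hMv2 : ∀ i j : Fin (p+q), (i:ℕ) < p-q → (j:ℕ) < p-q →
        (i:ℕ) < (j:ℕ) → Mm i j = - X j i := by
      intro i j h1 h2 h3
      have hmem : (⟨p-q-(i:ℕ), p-q-(j:ℕ)⟩ : (_:ℕ) × ℕ) ∈ S := by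
        rw [hSdef]
        simp only [Finset.mem_sigma, Finset.mem_Icc, Finset.mem_Ico]
        omega
      rw [hMdef, Matrix.sum_apply]
      refine (Finset.sum_eq_single_of_mem _ hmem ?_).trans ?_
      · intro x hxS hne
        obtain ⟨xj, xi⟩ := x
        obtain ⟨h1', h2'⟩ := Finset.mem_sigma.mp hxS
        obtain ⟨ha1, ha2⟩ := Finset.mem_Icc.mp (show xj ∈ Finset.Icc 1 (p-q) from h1')
        obtain ⟨hb1, hb2⟩ := Finset.mem_Ico.mp (show xi ∈ Finset.Ico 1 xj from h2')
        have hne' : ¬(xj = p-q-(i:ℕ) ∧ xi = p-q-(j:ℕ)) :=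
          fun ⟨u1, u2⟩ => hne (by subst u1; subst u2; rfl)
        show X (e (p - q - xi)) (e (p - q - xj)) • mGen p q xi xj i j = 0
        rw [mGen_apply, if_neg (by omega), if_neg (by omega)]
        simp
      · show X (e (p-q-(p-q-(j:ℕ)))) (e (p-q-(p-q-(i:ℕ))))
            • mGen p q (p-q-(j:ℕ)) (p-q-(i:ℕ)) i j = - X j i
        have e1 : e (p-q-(p-q-(j:ℕ))) = j := Fin.ext (by rw [he _ (by omega)]; omega)
        have e2 : e (p-q-(p-q-(i:ℕ))) = i := Fin.ext (by rw [he _ (by omega)]; omega)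
        rw [e1, e2, mGen_apply, if_neg (by omega),
          if_pos ⟨by omega, by omega⟩]
        simp
    have hFz : ∀ i j : Fin (p+q),
        (∀ k, 1 ≤ k → k ≤ q → ¬((i:ℕ) = p-k ∧ (j:ℕ) = p+k-1)
          ∧ ¬((i:ℕ) = p+k-1 ∧ (j:ℕ) = p-k)) → Fm i j = 0 := by
      intro i j hc
      rw [hFdef, Matrix.sum_apply]
      apply Finset.sum_eq_zero
      intro k hk
      obtain ⟨h1', h2'⟩ := Finset.mem_Icc.mp hk
      obtain ⟨u1, u2⟩ := hc k h1' h2'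
      show X (e (p - k)) (e (p + k - 1)) • aGen p q k i j = 0
      rw [aGen_apply, if_neg (by omega), if_neg (by omega)]
      simp
    have hFv : ∀ k, 1 ≤ k → k ≤ q → ∀ i j : Fin (p+q),
        (((i:ℕ) = p-k ∧ (j:ℕ) = p+k-1) ∨ ((i:ℕ) = p+k-1 ∧ (j:ℕ) = p-k)) →
        Fm i j = X (e (p-k)) (e (p+k-1)) := by
      intro k hk1 hk2 i j hcase
      rw [hFdef, Matrix.sum_apply]
      refine (Finset.sum_eq_single_of_mem _ (Finset.mem_Icc.mpr ⟨hk1, hk2⟩) ?_).trans ?_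
      · intro b hb hbk
        obtain ⟨h1', h2'⟩ := Finset.mem_Icc.mp hb
        show X (e (p - b)) (e (p + b - 1)) • aGen p q b i j = 0
        rcases hcase with ⟨u1, u2⟩ | ⟨u1, u2⟩ <;>
          (rw [aGen_apply, if_neg (by omega), if_neg (by omega)]; simp)
      · show X (e (p - k)) (e (p + k - 1)) • aGen p q k i j = X (e (p-k)) (e (p+k-1))
        rcases hcase with ⟨u1, u2⟩ | ⟨u1, u2⟩
        · rw [aGen_apply, if_pos ⟨by omega, by omega⟩, if_neg (by omega)]
          simp
        · rw [aGen_apply, if_neg (by omega), if_pos ⟨by omega, by omega⟩]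
          simp
    have hMF : Mm + Fm = X := by
      ext i j
      have hi' := i.isLt
      have hj' := j.isLt
      rw [Matrix.add_apply]
      by_cases h1 : (i:ℕ) < p - q
      · by_cases h2 : (j:ℕ) < p - q
        · rcases Nat.lt_trichotomy (i:ℕ) (j:ℕ) with hlt | heq | hgt
          · rw [hMv2 i j h1 h2 hlt, hFz i j (fun k hk1 hk2 => ⟨by omega, by omega⟩), add_zero]
            have := hanti i j (by omega) (by omega)
            linarith
          · have hij : i = j := Fin.ext heq
            subst hij
            rw [hMz i i (Or.inr rfl), hFz i i (fun k hk1 hk2 => ⟨by omega, by omega⟩), add_zero]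
            exact (hdiag i (by omega)).symm
          · rw [hMv1 i j h1 h2 hgt, hFz i j (fun k hk1 hk2 => ⟨by omega, by omega⟩), add_zero]
        · rw [hMz i j (Or.inl (by omega)), hFz i j (fun k hk1 hk2 => ⟨by omega, by omega⟩),
            add_zero]
          exact (hupper i j h1 (by omega)).symm
      · by_cases h2 : (j:ℕ) < p - q
        · rw [hMz i j (Or.inl (by omega)), hFz i j (fun k hk1 hk2 => ⟨by omega, by omega⟩),
            add_zero]
          exact (hlower i j (by omega) h2).symm
        · by_cases h3 : (i:ℕ) + (j:ℕ) = 2*p - 1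
          · by_cases h4 : (i:ℕ) < p
            · rw [hMz i j (Or.inl (by omega)),
                hFv (p - (i:ℕ)) (by omega) (by omega) i j (Or.inl ⟨by omega, by omega⟩)]
              have e1 : e (p - (p - (i:ℕ))) = i := Fin.ext (by rw [he _ (by omega)]; omega)
              have e2 : e (p + (p - (i:ℕ)) - 1) = j := Fin.ext (by rw [he _ (by omega)]; omega)
              rw [e1, e2, zero_add]
            · rw [hMz i j (Or.inl (by omega)),
                hFv (p - (j:ℕ)) (by omega) (by omega) i j (Or.inr ⟨by omega, by omega⟩)]
              have e1 : e (p - (p - (j:ℕ))) = j := Fin.ext (by rw [he _ (by omega)]; omega)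
              have e2 : e (p + (p - (j:ℕ)) - 1) = i := Fin.ext (by rw [he _ (by omega)]; omega)
              rw [e1, e2, zero_add]
              exact (hsymm i j (by omega) (by omega) (by omega)).symm
          · rw [hMz i j (Or.inl (by omega)), hFz i j (fun k hk1 hk2 => ⟨by omega, by omega⟩),
              add_zero]
            exact (hd5 i j (by omega) (by omega) h3).symm
    exact Submodule.mem_sup.mpr ⟨Mm, hMmem, Fm, hFmem, hMF⟩
  · -- m ⊔ a ⊆ centralizer
    intro hX
    constructor
    · have hle : mSub p q ⊔ aSub p q ≤ soPQ p q := by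
        apply sup_le
        · rw [mSub]
          apply Submodule.span_le.mpr
          rintro M ⟨u, v, h1, h2, h3, rfl⟩
          exact SetLike.mem_coe.mpr (mGen_mem_soPQ p q hq1 hqp u v h1 h2 h3)
        · rw [aSub]
          apply Submodule.span_le.mpr
          rintro M ⟨k, h1, h2, rfl⟩
          exact SetLike.mem_coe.mpr (aGen_mem_soPQ p q hq1 hqp k h1 h2)
      exact hle hX
    · intro F hF
      have hXc : ∀ k, 1 ≤ k → k ≤ q → aGen p q k * X - X * aGen p q k = 0 := by
        intro k hk1 hk2
        have hle : mSub p q ⊔ aSub p q ≤ commW (aGen p q k) := by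
          apply sup_le
          · rw [mSub]
            apply Submodule.span_le.mpr
            rintro M ⟨u, v, h1, h2, h3, rfl⟩
            exact SetLike.mem_coe.mpr ((mem_commW' _ _).mpr
              (aGen_mGen p q hq1 hqp k u v hk1 hk2 h1 h2 h3))
          · rw [aSub]
            apply Submodule.span_le.mpr
            rintro M ⟨l, h1, h2, rfl⟩
            exact SetLike.mem_coe.mpr ((mem_commW' _ _).mpr
              (aGen_comm p q hq1 hqp k l hk1 hk2 h1 h2))
        exact (mem_commW' _ _).mp (hle hX)
      have hle2 : aSub p q ≤ commW X := by
        rw [aSub]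
        apply Submodule.span_le.mpr
        rintro M ⟨k, h1, h2, rfl⟩
        refine SetLike.mem_coe.mpr ((mem_commW' _ _).mpr ?_)
        have h := hXc k h1 h2
        have h' := sub_eq_zero.mp h
        rw [sub_eq_zero, h']
      have h := (mem_commW' _ _).mp (hle2 hF)
      have h' := sub_eq_zero.mp h
      rw [sub_eq_zero, h']

end
end
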